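/- Let U ⊆ ℝ be an open set with r³ ≠ -2 for all r ∈ U, let φ(r) = 12^{2/3}·r/(2(r³+2)) and ψ(r) = 2·12^{1/3}·r²/(r³+2), and suppose the derivative φ'(r) ≠ 0 for every r ∈ U. Let H : ℝ → ℝ be six times differentiable on an open set V ⊆ ℝ containing φ(U), and suppose H(φ(r)) = ψ(r) for all r ∈ U. Then H satisfies Noth's equation at every point of φ(U): for all t ∈ φ(U), 10·(H''(t))³·H⁽⁶⁾(t) − 70·(H''(t))²·H⁽³⁾(t)·H⁽⁵⁾(t) − 49·(H''(t))²·(H⁽⁴⁾(t))² + 280·H''(t)·(H⁽³⁾(t))²·H⁽⁴⁾(t) − 175·(H⁽³⁾(t))⁴ = 0. -/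

import Mathlib

/-- Noth's equation at a point `t` for a function `H`, expressed via iterated derivatives. -/
def NothEqAt (H : ℝ → ℝ) (t : ℝ) : Prop :=
  10 * (iteratedDeriv 2 H t) ^ 3 * iteratedDeriv 6 H t
    - 70 * (iteratedDeriv 2 H t) ^ 2 * iteratedDeriv 3 H t * iteratedDeriv 5 H t
    - 49 * (iteratedDeriv 2 H t) ^ 2 * (iteratedDeriv 4 H t) ^ 2
    + 280 * iteratedDeriv 2 H t * (iteratedDeriv 3 H t) ^ 2 * iteratedDeriv 4 H t
    - 175 * (iteratedDeriv 3 H t) ^ 4 = 0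

/-!
Noth's equation is homogeneous of weight 4 in `H` and of weight 12 in `t`, so with `y` it is also
solved by `C · y(· / A)`. Up to such a rescaling the parametrized curve `(φ, ψ)` is the rational
cubic `2 t³ + y³ = t y`, `t = r / (r³ + 2)`, `y = r² / (r³ + 2)`. Along it, the derivatives
`dᵏy/dtᵏ` are obtained by iterating `(dt/dr)⁻¹ d/dr`; they are explicit rational functions of `r`,
and Noth's equation for them is a rational identity. Wherever `φ' ≠ 0`, the chain rule identifies
these functions with the derivatives of `H` at `φ r`.
-/

section ChainRule

variable {𝕜 F : Type*} [NontriviallyNormedField 𝕜] [NormedAddCommGroup F] [NormedSpace 𝕜 F]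
  {H : 𝕜 → F} {φ φ' : 𝕜 → 𝕜} {U : Set 𝕜}

theorem iteratedDeriv_succ_comp_eq (hU : IsOpen U) {k : ℕ} {g g' : 𝕜 → F}
    (hH : ∀ r ∈ U, DifferentiableAt 𝕜 (iteratedDeriv k H) (φ r))
    (hφ : ∀ r ∈ U, HasDerivAt φ (φ' r) r) (hφ' : ∀ r ∈ U, φ' r ≠ 0)
    (hg : ∀ r ∈ U, HasDerivAt g (φ' r • g' r) r)
    (hk : ∀ r ∈ U, iteratedDeriv k H (φ r) = g r) :
    ∀ r ∈ U, iteratedDeriv (k + 1) H (φ r) = g' r := by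
  intro r hr
  have chain : HasDerivAt (iteratedDeriv k H ∘ φ) (φ' r • iteratedDeriv (k + 1) H (φ r)) r := by
    rw [iteratedDeriv_succ]
    exact (hH r hr).hasDerivAt.scomp r (hφ r hr)
  have param : HasDerivAt (iteratedDeriv k H ∘ φ) (φ' r • g' r) r :=
    (hg r hr).congr_of_eventuallyEq (Filter.eventually_of_mem (hU.mem_nhds hr) hk)
  exact (smul_right_inj (hφ' r hr)).mp (chain.unique param)

theorem iteratedDeriv_comp_eq (hU : IsOpen U) {n : ℕ} {g : ℕ → 𝕜 → F}
    (hH : ∀ k < n, ∀ r ∈ U, DifferentiableAt 𝕜 (iteratedDeriv k H) (φ r))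
    (hφ : ∀ r ∈ U, HasDerivAt φ (φ' r) r) (hφ' : ∀ r ∈ U, φ' r ≠ 0)
    (hg : ∀ k < n, ∀ r ∈ U, HasDerivAt (g k) (φ' r • g (k + 1) r) r)
    (h₀ : ∀ r ∈ U, H (φ r) = g 0 r) :
    ∀ k ≤ n, ∀ r ∈ U, iteratedDeriv k H (φ r) = g k r := by
  intro k hk
  induction k with
  | zero => simpa only [iteratedDeriv_zero] using h₀
  | succ k ih =>
    exact iteratedDeriv_succ_comp_eq hU (hH k hk) hφ hφ' (hg k hk) (ih (Nat.le_of_succ_le hk))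

end ChainRule

def nothPoly (u₂ u₃ u₄ u₅ u₆ : ℝ) : ℝ :=
  10 * u₂ ^ 3 * u₆ - 70 * u₂ ^ 2 * u₃ * u₅ - 49 * u₂ ^ 2 * u₄ ^ 2 + 280 * u₂ * u₃ ^ 2 * u₄
    - 175 * u₃ ^ 4

theorem nothEqAt_iff_nothPoly {H : ℝ → ℝ} {t : ℝ} :
    NothEqAt H t ↔ nothPoly (iteratedDeriv 2 H t) (iteratedDeriv 3 H t) (iteratedDeriv 4 H t)
      (iteratedDeriv 5 H t) (iteratedDeriv 6 H t) = 0 :=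
  Iff.rfl

theorem nothPoly_scale (c m u₂ u₃ u₄ u₅ u₆ : ℝ) :
    nothPoly (c / m ^ 2 * u₂) (c / m ^ 3 * u₃) (c / m ^ 4 * u₄) (c / m ^ 5 * u₅) (c / m ^ 6 * u₆)
      = c ^ 4 / m ^ 12 * nothPoly u₂ u₃ u₄ u₅ u₆ := by
  unfold nothPoly
  ring

noncomputable def cubicT (x : ℝ) : ℝ := x / (x ^ 3 + 2)

/-- `cubicDeriv k r` is `dᵏy/dtᵏ` on the cubic `2 t³ + y³ = t y` at the point with parameter `r`,
where `t = cubicT r` and `y = cubicDeriv 0 r`; it is only computed up to `k = 6`. -/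
noncomputable def cubicDeriv : ℕ → ℝ → ℝ
  | 0, x => x ^ 2 / (x ^ 3 + 2)
  | 1, x => x * (x ^ 3 - 4) / (2 * (x ^ 3 - 1))
  | 2, x => -(x ^ 3 + 2) ^ 4 / (4 * (x ^ 3 - 1) ^ 3)
  | 3, x => 3 * x ^ 2 * (x ^ 3 - 10) * (x ^ 3 + 2) ^ 5 / (8 * (x ^ 3 - 1) ^ 5)
  | 4, x => -15 * x * (x ^ 9 - 12 * x ^ 6 + 84 * x ^ 3 + 8) * (x ^ 3 + 2) ^ 6
      / (16 * (x ^ 3 - 1) ^ 7)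
  | 5, x => 15 * (7 * x ^ 15 - 98 * x ^ 12 + 700 * x ^ 9 - 4552 * x ^ 6 - 1144 * x ^ 3 - 16)
      * (x ^ 3 + 2) ^ 7 / (32 * (x ^ 3 - 1) ^ 9)
  | 6, x => -945 * x ^ 2
      * (x ^ 18 - 16 * x ^ 15 + 128 * x ^ 12 - 696 * x ^ 9 + 4840 * x ^ 6 + 2176 * x ^ 3 + 128)
      * (x ^ 3 + 2) ^ 8 / (64 * (x ^ 3 - 1) ^ 11)
  | _, _ => 0

section Cubic

variable {r : ℝ}

theorem hasDerivAt_cubicT (h₂ : r ^ 3 ≠ -2) :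
    HasDerivAt cubicT (2 * (1 - r ^ 3) / (r ^ 3 + 2) ^ 2) r := by
  have h₂' : r ^ 3 + 2 ≠ 0 := mt eq_neg_iff_add_eq_zero.mpr h₂
  refine ((hasDerivAt_id' r).div ((hasDerivAt_pow 3 r).add_const 2) h₂').congr_deriv ?_
  field_simp
  ring

theorem hasDerivAt_cubicDeriv {k : ℕ} (hk : k < 6) (h₁ : r ^ 3 ≠ 1) (h₂ : r ^ 3 ≠ -2) :
    HasDerivAt (cubicDeriv k) (2 * (1 - r ^ 3) / (r ^ 3 + 2) ^ 2 * cubicDeriv (k + 1) r) r := by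
  have h₁ : r ^ 3 - 1 ≠ 0 := sub_ne_zero.mpr h₁
  have h₂ : r ^ 3 + 2 ≠ 0 := mt eq_neg_iff_add_eq_zero.mpr h₂
  have cube := hasDerivAt_pow 3 r
  have hp := cube.add_const (2 : ℝ)
  have hm := cube.sub_const (1 : ℝ)
  have hd : ∀ (c : ℝ) (n : ℕ), c ≠ 0 → c * (r ^ 3 - 1) ^ n ≠ 0 :=
    fun c n hc => mul_ne_zero hc (pow_ne_zero n h₁)
  interval_cases k
  · refine ((hasDerivAt_pow 2 r).fun_div hp h₂).congr_deriv ?_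
    simp only [cubicDeriv]; field_simp; ring
  · refine (((hasDerivAt_id' r).fun_mul (cube.sub_const 4)).fun_div (hm.const_mul 2)
      (mul_ne_zero two_ne_zero h₁)).congr_deriv ?_
    simp only [cubicDeriv]; field_simp; ring
  · refine ((hp.fun_pow 4).fun_neg.fun_div ((hm.fun_pow 3).const_mul 4)
      (hd 4 3 (by norm_num))).congr_deriv ?_
    simp only [cubicDeriv]; field_simp; ring
  · refine (((((hasDerivAt_pow 2 r).const_mul 3).fun_mul (cube.sub_const 10)).fun_mul
      (hp.fun_pow 5)).fun_div ((hm.fun_pow 5).const_mul 8) (hd 8 5 (by norm_num))).congr_deriv ?_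
    simp only [cubicDeriv]; field_simp; ring
  · refine (((((hasDerivAt_id' r).const_mul (-15)).fun_mul
      ((((hasDerivAt_pow 9 r).fun_sub ((hasDerivAt_pow 6 r).const_mul 12)).fun_add
        (cube.const_mul 84)).add_const 8)).fun_mul (hp.fun_pow 6)).fun_div
      ((hm.fun_pow 7).const_mul 16) (hd 16 7 (by norm_num))).congr_deriv ?_
    simp only [cubicDeriv]; field_simp; ring
  · refine ((((((((((hasDerivAt_pow 15 r).const_mul 7).fun_sub
        ((hasDerivAt_pow 12 r).const_mul 98)).fun_add ((hasDerivAt_pow 9 r).const_mul 700)).fun_sub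
        ((hasDerivAt_pow 6 r).const_mul 4552)).fun_sub (cube.const_mul 1144)).sub_const 16).const_mul
        15).fun_mul (hp.fun_pow 7)).fun_div ((hm.fun_pow 9).const_mul 32)
      (hd 32 9 (by norm_num))).congr_deriv ?_
    simp only [cubicDeriv]; field_simp; ring

theorem nothPoly_cubicDeriv (h₁ : r ^ 3 ≠ 1) :
    nothPoly (cubicDeriv 2 r) (cubicDeriv 3 r) (cubicDeriv 4 r) (cubicDeriv 5 r) (cubicDeriv 6 r)
      = 0 := by
  have h₁ : r ^ 3 - 1 ≠ 0 := sub_ne_zero.mpr h₁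
  simp only [nothPoly, cubicDeriv]
  field_simp
  ring

end Cubic

theorem noth_parametrization_recovered_translated
    (U V : Set ℝ) (hU : IsOpen U) (hUne : ∀ r ∈ U, r ^ 3 ≠ (-2 : ℝ))
    (φ ψ H : ℝ → ℝ)
    (hφ : ∀ r : ℝ, φ r = (12 : ℝ) ^ ((2 : ℝ) / 3) * r / (2 * (r ^ 3 + 2)))
    (hψ : ∀ r : ℝ, ψ r = 2 * (12 : ℝ) ^ ((1 : ℝ) / 3) * r ^ 2 / (r ^ 3 + 2))
    (hφ' : ∀ r ∈ U, deriv φ r ≠ 0)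
    (hVU : φ '' U ⊆ V)
    (hdiff : ∀ k < 6, ∀ t ∈ V, DifferentiableAt ℝ (iteratedDeriv k H) t)
    (hpar : ∀ r ∈ U, H (φ r) = ψ r) :
    ∀ t ∈ φ '' U, NothEqAt H t := by
  set A : ℝ := (12 : ℝ) ^ ((2 : ℝ) / 3) / 2 with hA_def
  set C : ℝ := 2 * (12 : ℝ) ^ ((1 : ℝ) / 3)
  have hA : A ≠ 0 := by positivity
  have hφT : φ = fun x => A * cubicT x := funext fun x => by
    rw [hφ, cubicT, hA_def, div_mul_eq_div_div_swap]; ring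
  have hφd : ∀ r ∈ U, HasDerivAt φ (A * (2 * (1 - r ^ 3) / (r ^ 3 + 2) ^ 2)) r :=
    fun r hr => hφT ▸ (hasDerivAt_cubicT (hUne r hr)).const_mul A
  have hφd0 : ∀ r ∈ U, A * (2 * (1 - r ^ 3) / (r ^ 3 + 2) ^ 2) ≠ 0 :=
    fun r hr => (hφd r hr).deriv ▸ hφ' r hr
  have h₁ : ∀ r ∈ U, r ^ 3 ≠ 1 := fun r hr h => hφd0 r hr (by rw [h]; ring)
  have key := iteratedDeriv_comp_eq hU (n := 6) (g := fun k x => C / A ^ k * cubicDeriv k x)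
    (fun k hk r hr => hdiff k hk (φ r) (hVU ⟨r, hr, rfl⟩)) hφd hφd0
    (fun k hk r hr => ((hasDerivAt_cubicDeriv hk (h₁ r hr) (hUne r hr)).const_mul _).congr_deriv
      (by rw [smul_eq_mul]; field_simp; ring))
    (fun r hr => by rw [hpar r hr, hψ, cubicDeriv]; ring)
  rintro _ ⟨r, hr, rfl⟩
  rw [nothEqAt_iff_nothPoly, key 2 (by norm_num) r hr, key 3 (by norm_num) r hr,
    key 4 (by norm_num) r hr, key 5 (by norm_num) r hr, key 6 le_rfl r hr]
  rw [nothPoly_scale, nothPoly_cubicDeriv (h₁ r hr), mul_zero]
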